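/- Corollary of the Nugget: Let n ≥ 3 and let S₀, …, S_{n−1}, R : ℝ → ℂ × ℂ be continuous functions (indices taken modulo n). Suppose there are points P ≠ Q in ℂ × ℂ with Sᵢ(0) = P for all i and R(0) = Q. Let 3 ≤ k ≤ n and let ι : Fin k → Fin n be strictly increasing, and define the sub-polygon area area(Δ(s)) := Σ_{j<k} area(O, S_{ι(j)}(s), S_{ι(j+1 mod k)}(s)), where O = (0,0). Suppose there is δ > 0 such that Σ_{i<n} |area(Sᵢ(s), S_{i+1 mod n}(s), R(s))| ≠ 0 for all s with 0 < |s| < δ. Then the quotient |area(Δ(s))| / Σ_{i<n} |area(Sᵢ(s), S_{i+1 mod n}(s), R(s))| tends to 0 as s tends to 0 with s ≠ 0. -/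

import Mathlib

/-!
Fix `w` with `cross (P - Q) w = 1` and put `aᵢ(s) = cross (Sᵢ(s) - R(s)) w`, so `aᵢ → 1`.
Measured from `R`, twice the area of `(R, Sᵢ, Sⱼ)` is `aᵢ aⱼ (Bⱼ - Bᵢ)` with
`Bᵢ = cross (P - Q) (Sᵢ - R) / aᵢ`. The differences `B_{ι(j+1)} - B_{ι j}` sum to zero around
the sub-polygon, so twice its area is `∑ⱼ (a_{ι j} a_{ι(j+1)} - 1)(B_{ι(j+1)} - B_{ι j})`.
Each such difference is bounded by the total variation `∑ᵢ |B_{i+1} - Bᵢ|`, which is at most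
`8 ∑ᵢ |area(Sᵢ, S_{i+1}, R)|` as long as `|aᵢ| ≥ 1/2`. Hence the quotient is at most
`4 ∑ⱼ |a_{ι j} a_{ι(j+1)} - 1| → 0`.
-/

/-- The signed area of the ordered triangle `(p, q, r)` in the complex plane `ℂ × ℂ`. -/
noncomputable def triArea (p q r : ℂ × ℂ) : ℂ :=
  ((q.1 - p.1) * (r.2 - p.2) - (r.1 - p.1) * (q.2 - p.2)) / 2

def cross {R : Type*} [CommRing R] (x y : R × R) : R := x.1 * y.2 - y.1 * x.2

/-- In the basis `e, w` with `cross e w = 1`, the vector `u` has coordinates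
`(cross u w, cross e u)`. -/
lemma cross_eq_of_cross_eq_one {R : Type*} [CommRing R] {e w : R × R} (h : cross e w = 1)
    (u v : R × R) : cross u v = cross u w * cross e v - cross v w * cross e u := by
  rw [← mul_one (cross u v), ← h]
  simp only [cross]; ring

lemma exists_cross_eq_one {K : Type*} [Field K] {e : K × K} (he : e ≠ 0) :
    ∃ w, cross e w = 1 := by
  by_cases h1 : e.1 = 0
  · have h2 : e.2 ≠ 0 := fun h2 => he (Prod.ext h1 h2)
    exact ⟨(-e.2⁻¹, 0), by simp [cross, h2]⟩
  · exact ⟨(0, e.1⁻¹), by simp [cross, h1]⟩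

lemma triArea_eq_cross (p q r : ℂ × ℂ) : triArea p q r = cross (q - p) (r - p) / 2 := by
  simp only [triArea, cross, Prod.fst_sub, Prod.snd_sub]

lemma triArea_rotate (p q r : ℂ × ℂ) : triArea q r p = triArea p q r := by
  simp only [triArea]; ring

lemma sum_triArea_base_eq {k : ℕ} [NeZero k] (F : Fin k → ℂ × ℂ) (p q : ℂ × ℂ) :
    ∑ j, triArea p (F j) (F (j + 1)) = ∑ j, triArea q (F j) (F (j + 1)) := by
  have hshift : ∀ x : ℂ × ℂ, ∑ j, cross x (F (j + 1)) = ∑ j, cross x (F j) :=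
    fun x => Fintype.sum_equiv (Equiv.addRight 1) _ _ fun _ => rfl
  have hterm : ∀ x u v, 2 * triArea x u v = cross u v + (cross x u - cross x v) := by
    intro x u v
    simp only [triArea, cross]; ring
  have hbase : ∀ x, 2 * ∑ j, triArea x (F j) (F (j + 1)) = ∑ j, cross (F j) (F (j + 1)) := by
    intro x
    simp only [Finset.mul_sum, hterm, Finset.sum_add_distrib, Finset.sum_sub_distrib, hshift,
      sub_self, add_zero]
  exact mul_left_cancel₀ two_ne_zero ((hbase p).trans (hbase q).symm)

open Fin.NatCast in
lemma dist_le_sum_dist_add_one {α : Type*} [PseudoMetricSpace α] {m : ℕ} [NeZero m]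
    (F : Fin m → α) (x y : Fin m) : dist (F x) (F y) ≤ ∑ i, dist (F (i + 1)) (F i) := by
  have hpath := dist_le_range_sum_dist (fun t : ℕ => F (y + (t : Fin m))) (x - y).val
  simp only [Nat.cast_zero, add_zero, Fin.cast_val_eq_self, add_sub_cancel] at hpath
  calc dist (F x) (F y)
      = dist (F y) (F x) := dist_comm _ _
    _ ≤ ∑ t ∈ Finset.range (x - y).val, dist (F (y + t)) (F (y + (t + 1 : ℕ))) := hpath
    _ ≤ ∑ t ∈ Finset.range m, dist (F (y + t)) (F (y + (t + 1 : ℕ))) :=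
        Finset.sum_le_sum_of_subset_of_nonneg (Finset.range_subset_range.2 (x - y).isLt.le)
          fun _ _ _ => dist_nonneg
    _ = ∑ i : Fin m, dist (F (y + i)) (F (y + i + 1)) := by
        rw [← Fin.sum_univ_eq_sum_range]
        simp only [Fin.cast_val_eq_self, Nat.cast_add, Nat.cast_one, add_assoc]
    _ = ∑ i, dist (F (i + 1)) (F i) :=
        Fintype.sum_equiv (Equiv.addLeft y) _ _ fun _ => dist_comm _ _

lemma norm_sum_mul_sub_le {𝕜 : Type*} [SeminormedRing 𝕜] {n k : ℕ} [NeZero n] [NeZero k]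
    (B : Fin n → 𝕜) (ι : Fin k → Fin n) (c : Fin k → 𝕜) :
    ‖∑ j, c j * (B (ι (j + 1)) - B (ι j))‖ ≤ (∑ j, ‖c j - 1‖) * ∑ i, ‖B (i + 1) - B i‖ := by
  have htelescope : ∑ j, (B (ι (j + 1)) - B (ι j)) = 0 := by
    rw [Finset.sum_sub_distrib, sub_eq_zero]
    exact Fintype.sum_equiv (Equiv.addRight 1) _ _ fun _ => rfl
  have hjump : ∀ x y, ‖B x - B y‖ ≤ ∑ i, ‖B (i + 1) - B i‖ := by
    simpa only [dist_eq_norm] using dist_le_sum_dist_add_one B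
  calc ‖∑ j, c j * (B (ι (j + 1)) - B (ι j))‖
      = ‖∑ j, (c j - 1) * (B (ι (j + 1)) - B (ι j))‖ := by
        simp only [sub_one_mul, Finset.sum_sub_distrib, htelescope, sub_zero]
    _ ≤ ∑ j, ‖c j - 1‖ * ‖B (ι (j + 1)) - B (ι j)‖ :=
        (norm_sum_le _ _).trans (Finset.sum_le_sum fun _ _ => norm_mul_le _ _)
    _ ≤ ∑ j, ‖c j - 1‖ * ∑ i, ‖B (i + 1) - B i‖ :=
        Finset.sum_le_sum fun _ _ => mul_le_mul_of_nonneg_left (hjump _ _) (norm_nonneg _)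
    _ = _ := (Finset.sum_mul _ _ _).symm

lemma sum_norm_le_four_mul {𝕜 : Type*} [NormedDivisionRing 𝕜] {n : ℕ} [NeZero n]
    (a x : Fin n → 𝕜) (ha : ∀ i, 1 / 2 ≤ ‖a i‖) :
    ∑ i, ‖x i‖ ≤ 4 * ∑ i, ‖a i * a (i + 1) * x i‖ := by
  rw [Finset.mul_sum]
  refine Finset.sum_le_sum fun i _ => ?_
  have h := mul_le_mul (ha i) (ha (i + 1)) (by norm_num) (norm_nonneg _)
  rw [norm_mul, norm_mul]
  nlinarith [norm_nonneg (x i)]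

lemma norm_sum_triArea_le {n k : ℕ} [NeZero n] [NeZero k] (S : Fin n → ℂ × ℂ)
    (ι : Fin k → Fin n) (p r e w : ℂ × ℂ) (hew : cross e w = 1)
    (ha : ∀ i, 1 / 2 ≤ ‖cross (S i - r) w‖) :
    ‖∑ j, triArea p (S (ι j)) (S (ι (j + 1)))‖ ≤
      4 * (∑ j, ‖cross (S (ι j) - r) w * cross (S (ι (j + 1)) - r) w - 1‖) *
        ∑ i, ‖triArea (S i) (S (i + 1)) r‖ := by
  set a : Fin n → ℂ := fun i => cross (S i - r) w
  set B : Fin n → ℂ := fun i => cross e (S i - r) / a i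
  have ha0 : ∀ i, a i ≠ 0 := fun i =>
    norm_pos_iff.1 ((by norm_num : (0 : ℝ) < 1 / 2).trans_le (ha i))
  have htri : ∀ i j, triArea r (S i) (S j) = a i * a j * (B j - B i) / 2 := by
    intro i j
    rw [triArea_eq_cross, cross_eq_of_cross_eq_one hew]
    simp only [B]
    field_simp [ha0 i, ha0 j]
    ring
  have hden : ∑ i, ‖triArea (S i) (S (i + 1)) r‖ =
      (∑ i, ‖a i * a (i + 1) * (B (i + 1) - B i)‖) / 2 := by
    rw [Finset.sum_div]
    refine Finset.sum_congr rfl fun i _ => ?_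
    rw [triArea_rotate, htri, norm_div, Complex.norm_two]
  have hnum : ‖∑ j, triArea p (S (ι j)) (S (ι (j + 1)))‖ =
      ‖∑ j, a (ι j) * a (ι (j + 1)) * (B (ι (j + 1)) - B (ι j))‖ / 2 := by
    rw [sum_triArea_base_eq _ p r]
    simp only [htri, ← Finset.sum_div, norm_div, Complex.norm_two]
  rw [hnum, hden]
  have hbound := (norm_sum_mul_sub_le B ι fun j => a (ι j) * a (ι (j + 1))).trans
    (mul_le_mul_of_nonneg_left (sum_norm_le_four_mul a _ ha)
      (Finset.sum_nonneg fun _ _ => norm_nonneg _))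
  simp only [mul_assoc] at hbound ⊢
  linarith

lemma Fin.mk_one_eq_one {m : ℕ} [NeZero m] (h : 1 < m) : (⟨1, h⟩ : Fin m) = 1 :=
  Fin.ext (Nat.mod_eq_of_lt h).symm

open Filter Topology in
/-- **Corollary of the Nugget.** With the setup of the nugget on wheels, for any sub-polygon
determined by a strictly increasing selection `ι : Fin k → Fin n` of at least three of the
vertices `S i`, the area of the sub-polygon becomes small relative to the sum of the absolute
values of the areas of the spoke triangles `(S i, S (i+1), R)`. -/
theorem nugget_corollary (n : ℕ) (hn : 3 ≤ n)
    (S : Fin n → ℝ → ℂ × ℂ) (R : ℝ → ℂ × ℂ)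
    (hS : ∀ i, Continuous (S i)) (hR : Continuous R)
    (P Q : ℂ × ℂ) (hPQ : P ≠ Q)
    (hS0 : ∀ i, S i 0 = P) (hR0 : R 0 = Q)
    (k : ℕ) (hk : 3 ≤ k)
    (ι : Fin k → Fin n) :
    Filter.Tendsto
      (fun s : ℝ =>
        ‖(∑ j : Fin k,
            triArea ((0, 0) : ℂ × ℂ) (S (ι j) s) (S (ι (j + ⟨1, by omega⟩)) s))‖ /
          ∑ i : Fin n, ‖(triArea (S i s) (S (i + ⟨1, by omega⟩) s) (R s))‖)
      (nhdsWithin 0 {(0 : ℝ)}ᶜ) (nhds 0) := by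
  have : NeZero n := ⟨by omega⟩
  have : NeZero k := ⟨by omega⟩
  simp only [Fin.mk_one_eq_one]
  obtain ⟨w, hw⟩ := exists_cross_eq_one (sub_ne_zero.2 hPQ)
  set a : Fin n → ℝ → ℂ := fun i s => cross (S i s - R s) w
  have ha : ∀ i, Tendsto (a i) (𝓝 0) (𝓝 1) := fun i => by
    have hcont : Continuous (a i) := by
      simp only [a, cross]
      fun_prop
    simpa [a, hS0, hR0, hw] using hcont.tendsto 0
  have hnear : ∀ᶠ s in 𝓝 0, ∀ i, 1 / 2 ≤ ‖a i s‖ :=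
    eventually_all.2 fun i => (ha i).norm.eventually (eventually_ge_nhds (by norm_num))
  have hbound : Tendsto (fun s => 4 * ∑ j, ‖a (ι j) s * a (ι (j + 1)) s - 1‖) (𝓝 0) (𝓝 0) := by
    have hprod : ∀ j, Tendsto (fun s => a (ι j) s * a (ι (j + 1)) s - 1) (𝓝 0) (𝓝 0) :=
      fun j => by simpa using ((ha _).mul (ha _)).sub_const 1
    simpa using (tendsto_finsetSum _ fun j _ => (hprod j).norm).const_mul 4
  refine squeeze_zero' (Eventually.of_forall fun s => by positivity) ?_
    (hbound.mono_left nhdsWithin_le_nhds)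
  filter_upwards [nhdsWithin_le_nhds hnear] with s hs
  exact div_le_of_le_mul₀ (by positivity) (by positivity)
    (norm_sum_triArea_le (fun i => S i s) ι _ (R s) (P - Q) w hw hs)
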